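/- The sunny-side-up shift on H = F^(N) (configurations in {*,†}^H with at most one symbol *) equals the substitutional subshift X_τ for the deterministic substitution τ(†) = (†,…,†) and τ(*) = (*,†,…,†). -/
import Mathlib

set_option linter.unusedSectionVars false


/-!
The sunny-side-up shift on `H = F^(ℕ)` (configurations in `{*, †}^H` with at most
one `*`) equals the substitutional subshift `X_τ` for the deterministic
substitution `τ(†) = (†,…,†)`, `τ(*) = (*,†,…,†)` (with `*` at the identity
coordinate of `F`).  We encode the alphabet as `Bool`, with `* = true`,
`† = false`, and `H = ℕ →₀ F` written additively.
-/

variable {F : Type*} [AddGroup F] [Fintype F] [DecidableEq F]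

/-- The element `(f, h₀, h₁, …)` of `H = ℕ →₀ F`. -/
noncomputable def cons (f : F) (h : ℕ →₀ F) : ℕ →₀ F :=
  Finsupp.single 0 f + Finsupp.embDomain ⟨Nat.succ, Nat.succ_injective⟩ h

/-- `τ̃` induced by a substitution `τ : A → 𝒫(A^F)`. -/
noncomputable def tildeTau {A : Type*} (τ : A → Set (F → A))
    (x : (ℕ →₀ F) → A) : Set ((ℕ →₀ F) → A) :=
  {y | ∀ h : ℕ →₀ F, (fun f : F => y (cons f h)) ∈ τ (x h)}

/-- `X₀ = A^H`, `X_{n+1} = ⋃_{f ∈ F} f_{@0} · τ̃(X_n)`. -/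
noncomputable def subLevel {A : Type*} (τ : A → Set (F → A)) :
    ℕ → Set ((ℕ →₀ F) → A)
  | 0 => Set.univ
  | n + 1 =>
      {z | ∃ f : F, ∃ x ∈ subLevel τ n, ∃ y ∈ tildeTau τ x,
        z = fun h => y (h + Finsupp.single 0 f)}

/-- The substitutional subshift `X_τ = ⋂ₙ Xₙ`. -/
noncomputable def subShift {A : Type*} (τ : A → Set (F → A)) :
    Set ((ℕ →₀ F) → A) :=
  ⋂ n, subLevel τ n

/-- The sunny-side-up substitution: `τ(†)` is constant `†`, and `τ(*)` has `*`
at the identity coordinate and `†` elsewhere. -/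
def ssuTau : Bool → Set (F → Bool)
  | false => {fun _ => false}
  | true => {fun f => decide (f = 0)}

/-- The tail `(h₁, h₂, …)` of `h = (h₀, h₁, …)`. -/
noncomputable def tl (h : ℕ →₀ F) : ℕ →₀ F :=
  Finsupp.comapDomain Nat.succ h (Nat.succ_injective.injOn)

lemma tl_apply (h : ℕ →₀ F) (i : ℕ) : tl h i = h (i + 1) := rfl

lemma cons_apply_zero (f : F) (h : ℕ →₀ F) : cons f h 0 = f := by
  simp only [cons, Finsupp.add_apply, Finsupp.single_eq_same]
  rw [Finsupp.embDomain_notin_range, add_zero]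
  rintro ⟨a, ha⟩
  simp only [Function.Embedding.coeFn_mk] at ha
  omega

lemma cons_apply_succ (f : F) (h : ℕ →₀ F) (i : ℕ) : cons f h (i + 1) = h i := by
  have e : (⟨Nat.succ, Nat.succ_injective⟩ : ℕ ↪ ℕ) i = i + 1 := rfl
  simp only [cons, Finsupp.add_apply, ← e, Finsupp.embDomain_apply,
    Finsupp.single_apply]
  simp [e]

lemma cons_tl (g : ℕ →₀ F) : cons (g 0) (tl g) = g := by
  ext i
  cases i with
  | zero => exact cons_apply_zero _ _
  | succ j => rw [cons_apply_succ]; rfl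

lemma tl_cons (f : F) (h : ℕ →₀ F) : tl (cons f h) = h := by
  ext i
  rw [tl_apply, cons_apply_succ]

lemma tl_add_single0 (h : ℕ →₀ F) (f : F) :
    tl (h + Finsupp.single 0 f) = tl h := by
  ext i
  simp [tl_apply, Finsupp.add_apply, Finsupp.single_apply]

lemma add_single0_eq (h : ℕ →₀ F) (f : F) :
    h + Finsupp.single 0 f = cons (h 0 + f) (tl h) := by
  rw [← cons_tl (h + Finsupp.single 0 f), tl_add_single0]
  congr 1
  simp [Finsupp.add_apply]

lemma key : ∀ n : ℕ, ∀ z ∈ subLevel (ssuTau (F := F)) n,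
    ∀ h h' : ℕ →₀ F, z h = true → z h' = true → ∀ i < n, h i = h' i := by
  intro n
  induction n with
  | zero => intro z _ h h' _ _ i hi; omega
  | succ n ih =>
    rintro z ⟨f, x, hx, y, hy, rfl⟩ h h' hh hh' i hi
    have helper : ∀ k : ℕ →₀ F, y (k + Finsupp.single 0 f) = true →
        x (tl k) = true ∧ k 0 + f = 0 := by
      intro k hk
      rw [add_single0_eq] at hk
      have h2 := hy (tl k)
      cases hxk : x (tl k) with
      | false =>
        rw [hxk] at h2
        have h3 : (fun g : F => y (cons g (tl k))) = fun _ => false := h2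
        have h4 := congrFun h3 (k 0 + f)
        simp only [h4] at hk
        exact absurd hk (by simp)
      | true =>
        rw [hxk] at h2
        have h3 : (fun g : F => y (cons g (tl k))) = fun g => decide (g = 0) := h2
        have h4 := congrFun h3 (k 0 + f)
        rw [h4] at hk
        exact ⟨rfl, by simpa using hk⟩
    obtain ⟨hx1, hz1⟩ := helper h hh
    obtain ⟨hx2, hz2⟩ := helper h' hh'
    cases i with
    | zero => exact add_right_cancel (hz1.trans hz2.symm)
    | succ j =>
      have := ih x hx (tl h) (tl h') hx1 hx2 j (by omega)
      simpa [tl_apply] using this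

lemma mem_level : ∀ (n : ℕ) (x : (ℕ →₀ F) → Bool),
    (∀ h h' : ℕ →₀ F, x h = true → x h' = true → h = h') →
    x ∈ subLevel (ssuTau (F := F)) n := by
  intro n
  induction n with
  | zero => intro x _; trivial
  | succ n ih =>
    intro x hx
    by_cases hex : ∃ h₀, x h₀ = true
    · obtain ⟨h₀, hh₀⟩ := hex
      have xeq : ∀ h, x h = decide (h = h₀) := by
        intro h
        cases hxh : x h with
        | true => simp [hx h h₀ hxh hh₀]
        | false =>
          by_cases he : h = h₀
          · rw [he] at hxh; rw [hxh] at hh₀; exact absurd hh₀ (by simp)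
          · simp [he]
      refine ⟨-(h₀ 0), fun h => decide (h = tl h₀), ih _ ?_,
        fun g => decide (g 0 = 0 ∧ tl g = tl h₀), ?_, ?_⟩
      · intro h h' e e'
        simp only [decide_eq_true_eq] at e e'
        rw [e, e']
      · intro k
        by_cases hk : k = tl h₀
        · have e1 : (fun h => decide (h = tl h₀)) k = true := by simp [hk]
          rw [e1]
          show _ = fun g : F => decide (g = 0)
          funext g
          simp [cons_apply_zero, tl_cons, hk]
        · have e1 : (fun h => decide (h = tl h₀)) k = false := by simp [hk]
          rw [e1]
          show _ = fun _ : F => false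
          funext g
          simp [tl_cons, hk]
      · funext h
        rw [xeq h]
        show _ = decide (_ ∧ _)
        rw [decide_eq_decide]
        constructor
        · rintro rfl
          refine ⟨?_, tl_add_single0 _ _⟩
          simp [Finsupp.add_apply]
        · rintro ⟨e0, et⟩
          rw [tl_add_single0] at et
          simp only [Finsupp.add_apply, Finsupp.single_eq_same] at e0
          have e0' : h 0 = h₀ 0 := by
            have := add_neg_eq_zero.mp e0
            exact this
          rw [← cons_tl h, ← cons_tl h₀, e0', et]
    · push_neg at hex
      refine ⟨0, fun _ => false, ih _ (by simp), fun _ => false, ?_, ?_⟩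
      · intro k
        show _ = fun _ : F => false
        rfl
      · funext h
        exact Bool.eq_false_iff.mpr (hex h)

/-- The sunny-side-up shift equals the substitutional subshift `X_τ`. -/
theorem sunny_side_up_is_substitutional :
    subShift (ssuTau (F := F)) =
      {x : (ℕ →₀ F) → Bool | ∀ h h' : ℕ →₀ F,
        x h = true → x h' = true → h = h'} := by
  ext x
  constructor
  · intro hx h h' hh hh'
    ext i
    exact key (i + 1) x (Set.mem_iInter.mp hx (i + 1)) h h' hh hh' i (Nat.lt_succ_self i)
  · intro hx
    exact Set.mem_iInter.mpr fun n => mem_level n x hx
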